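/- Let K be a real number with 0 < K < 1 and consider the polynomial p_K(x) = -2x³ + x² + K. Then p_K has exactly one real root s, and s lies in the open interval (√K, 1). -/
import Mathlib


theorem stmt_4 (K : ℝ) (hK0 : 0 < K) (hK1 : K < 1) :
    ∃ s : ℝ, (-2 * s ^ 3 + s ^ 2 + K = 0 ∧ s ∈ Set.Ioo (Real.sqrt K) 1) ∧
      ∀ t : ℝ, -2 * t ^ 3 + t ^ 2 + K = 0 → t = s := by
  set f : ℝ → ℝ := fun x => -2 * x ^ 3 + x ^ 2 + K with hf
  have hsq : Real.sqrt K ^ 2 = K := Real.sq_sqrt hK0.le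
  have hs0 : 0 < Real.sqrt K := Real.sqrt_pos.mpr hK0
  have hs1 : Real.sqrt K < 1 := by
    rw [show (1 : ℝ) = Real.sqrt 1 by simp]
    exact Real.sqrt_lt_sqrt hK0.le hK1
  have hfa : 0 < f (Real.sqrt K) := by
    simp only [hf]
    nlinarith [hs0, hs1, hK0]
  have hfb : f 1 < 0 := by simp only [hf]; nlinarith
  have hcont : ContinuousOn f (Set.Icc (Real.sqrt K) 1) := by
    apply Continuous.continuousOn; fun_prop
  have h0 : (0 : ℝ) ∈ Set.Ioo (f 1) (f (Real.sqrt K)) := ⟨hfb, hfa⟩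
  obtain ⟨s, hsmem, hfs⟩ := intermediate_value_Ioo' hs1.le hcont h0
  -- any root is > 1/2
  have hroot_half : ∀ t : ℝ, f t = 0 → (1 : ℝ) / 2 < t := by
    intro t ht
    by_contra h
    push_neg at h
    simp only [hf] at ht
    nlinarith [sq_nonneg t]
  refine ⟨s, ⟨hfs, hsmem⟩, ?_⟩
  intro t ht
  have hts : f t = 0 := ht
  have ht2 := hroot_half t hts
  have hs2 := hroot_half s hfs
  have hfactor : (t - s) * ((t + s) - 2 * (t ^ 2 + t * s + s ^ 2)) = 0 := by
    have hfs' : -2 * s ^ 3 + s ^ 2 + K = 0 := hfs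
    linear_combination ht - hfs'
  have hneg : (t + s) - 2 * (t ^ 2 + t * s + s ^ 2) < 0 := by nlinarith
  have := mul_eq_zero.mp hfactor
  rcases this with h | h
  · linarith
  · linarith
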